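/- arXiv:2003.02397 — 3 statements merged into one kernel-verified Lean document; each statement's English description precedes it below -/
import Mathlib

section
/- Let Z be a finite set of points in P^n such that for every positive dimensional linear subspace H of P^n we have (|Z ∩ H| - 1)/dim H ≤ (|Z| - 1)/n. Then for every integer d ≥ 0, the modified expected number of conditions Ex.C(Z,d), defined as the minimum over all finite covers of Z by nonempty linear subspaces H_0,...,H_s of the quantity ∑_i (d·dim(H_i) + 1), equals min{|Z|, nd + 1}. -/
open Module Finset
open scoped LinearAlgebra.Projectivization

/-!
A cover by subspaces `H_1, …, H_t` of total projective dimension `S` costs `d S + t`. The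
balance condition gives `n |Z ∩ H| ≤ n + (|Z| - 1) dim H` for each `H` (for lines, `|Z ∩ H| ≤ 1`),
and summing over the cover gives `n |Z| ≤ n t + (|Z| - 1) S`. This linear inequality forces
`d S + t ≥ min{|Z|, nd + 1}`; the two extreme covers (by the points of `Z`, and by all of `ℙ^n`)
attain the two values.
-/

/-- The modified expected number of conditions `Ex.C(Z, d)`: the minimum over all covers of
`Z` by nonempty linear subspaces `H_0,...,H_s` of `ℙ^n` of `∑_i (d · dim H_i + 1)`, where
`dim` is projective dimension (so a subspace corresponds to a nonzero submodule `H` with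
projective dimension `finrank H - 1`). -/
noncomputable def ExC {K : Type*} [Field K] {V : Type*} [AddCommGroup V] [Module K V]
    (Z : Finset (ℙ K V)) (d : ℕ) : ℕ :=
  sInf {m : ℕ | ∃ s : Finset (Submodule K V), (∀ H ∈ s, H ≠ ⊥) ∧
    (∀ z ∈ Z, ∃ H ∈ s, Projectivization.submodule z ≤ H) ∧
    m = ∑ H ∈ s, (d * (Module.finrank K H - 1) + 1)}

lemma min_le_of_mul_le_mul_add {n c t S : ℕ} (d : ℕ) (ht : 0 < t)
    (hcover : n * c ≤ n * t + (c - 1) * S) :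
    min c (n * d + 1) ≤ d * S + t := by
  by_contra! h
  obtain ⟨hc, hnd⟩ := lt_min_iff.mp h
  obtain ⟨c, rfl⟩ : ∃ c', c = c' + 1 := ⟨c - 1, by omega⟩
  have hS : S < n := Nat.lt_of_mul_lt_mul_left (a := d) (by rw [mul_comm d n]; omega)
  simp only [Nat.add_sub_cancel] at hcover
  zify at hc hnd hcover hS
  -- Weighting `d S + t ≤ c` by `n - S` and `d S + t ≤ n d` by `S` contradicts `hcover`.
  nlinarith [mul_nonneg (by omega : (0 : ℤ) ≤ c - (d * S + t)) (by omega : (0 : ℤ) ≤ n - S),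
    mul_nonneg (by omega : (0 : ℤ) ≤ n * d - (d * S + t)) (Int.natCast_nonneg S)]

section

variable {K V : Type*} [Field K] [AddCommGroup V] [Module K V]

def IsSubspaceCover (Z : Finset (ℙ K V)) (s : Finset (Submodule K V)) : Prop :=
  (∀ H ∈ s, H ≠ ⊥) ∧ ∀ z ∈ Z, ∃ H ∈ s, z.submodule ≤ H

lemma isSubspaceCover_image_submodule (Z : Finset (ℙ K V)) :
    IsSubspaceCover Z (Z.image Projectivization.submodule) := by
  refine ⟨?_, fun z hz => ⟨z.submodule, mem_image_of_mem _ hz, le_rfl⟩⟩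
  simp only [mem_image]
  rintro _ ⟨z, -, rfl⟩ h
  have := z.finrank_submodule
  rw [h, finrank_bot] at this
  exact zero_ne_one this

lemma isSubspaceCover_top [Nontrivial V] (Z : Finset (ℙ K V)) : IsSubspaceCover Z {⊤} :=
  ⟨by simp, fun _ _ => ⟨⊤, mem_singleton_self _, le_top⟩⟩

lemma ExC_le_sum {Z : Finset (ℙ K V)} {s : Finset (Submodule K V)} (hs : IsSubspaceCover Z s)
    (d : ℕ) : ExC Z d ≤ ∑ H ∈ s, (d * (finrank K H - 1) + 1) :=
  Nat.sInf_le ⟨s, hs.1, hs.2, rfl⟩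

lemma le_ExC {Z : Finset (ℙ K V)} {d b : ℕ}
    (h : ∀ s, IsSubspaceCover Z s → b ≤ ∑ H ∈ s, (d * (finrank K H - 1) + 1)) :
    b ≤ ExC Z d := by
  have hZ := isSubspaceCover_image_submodule Z
  refine le_csInf ⟨_, Z.image Projectivization.submodule, hZ.1, hZ.2, rfl⟩ ?_
  rintro _ ⟨s, hne, hcov, rfl⟩
  exact h s ⟨hne, hcov⟩

lemma ExC_le_card (Z : Finset (ℙ K V)) (d : ℕ) : ExC Z d ≤ #Z := by
  refine (ExC_le_sum (isSubspaceCover_image_submodule Z) d).trans_eq ?_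
  rw [sum_image fun _ _ _ _ h => Projectivization.submodule_injective h]
  simp [Projectivization.finrank_submodule]

lemma ExC_le_finrank [Nontrivial V] (Z : Finset (ℙ K V)) (d : ℕ) :
    ExC Z d ≤ d * (finrank K V - 1) + 1 := by
  simpa using ExC_le_sum (isSubspaceCover_top Z) d

open scoped Classical

lemma ncard_setOf_submodule_le (Z : Finset (ℙ K V)) (H : Submodule K V) :
    Set.ncard {z ∈ (Z : Set (ℙ K V)) | z.submodule ≤ H} = #(Z.filter (·.submodule ≤ H)) := by
  rw [← Set.ncard_coe_finset, coe_filter]; rfl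

lemma card_filter_submodule_le_le_one (Z : Finset (ℙ K V)) {H : Submodule K V}
    (hH : finrank K H = 1) : #(Z.filter (·.submodule ≤ H)) ≤ 1 := by
  have : FiniteDimensional K H := Module.finite_of_finrank_eq_succ hH
  have eq_H : ∀ z ∈ Z.filter (·.submodule ≤ H), z.submodule = H := fun z hz =>
    Submodule.eq_of_le_of_finrank_eq (mem_filter.mp hz).2 (by rw [hH, z.finrank_submodule])
  exact card_le_one.mpr fun z hz w hw =>
    Projectivization.submodule_injective ((eq_H z hz).trans (eq_H w hw).symm)

lemma card_le_sum_card_filter_of_isSubspaceCover {Z : Finset (ℙ K V)}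
    {s : Finset (Submodule K V)} (hs : IsSubspaceCover Z s) :
    #Z ≤ ∑ H ∈ s, #(Z.filter (·.submodule ≤ H)) := by
  refine (card_le_card fun z hz => ?_).trans card_biUnion_le
  obtain ⟨H, hH, hle⟩ := hs.2 z hz
  exact mem_biUnion.mpr ⟨H, hH, mem_filter.mpr ⟨hz, hle⟩⟩

variable [FiniteDimensional K V] {Z : Finset (ℙ K V)} {n : ℕ}
  (hbal : ∀ H : Submodule K V, 2 ≤ finrank K H →
    (#(Z.filter (·.submodule ≤ H)) - 1) * n ≤ (#Z - 1) * (finrank K H - 1))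
include hbal

lemma mul_card_filter_submodule_le {H : Submodule K V} (hH : H ≠ ⊥) :
    n * #(Z.filter (·.submodule ≤ H)) ≤ n + (#Z - 1) * (finrank K H - 1) := by
  rcases le_or_gt 2 (finrank K H) with h2 | h2
  · have := hbal H h2
    calc n * #(Z.filter (·.submodule ≤ H)) ≤ n * (1 + (#(Z.filter (·.submodule ≤ H)) - 1)) :=
          Nat.mul_le_mul_left n (by omega)
      _ ≤ n + (#Z - 1) * (finrank K H - 1) := by rw [mul_add, mul_one, mul_comm]; omega
  · have hfin : finrank K H = 1 := by
      have := Submodule.finrank_eq_zero.not.mpr hH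
      omega
    have := card_filter_submodule_le_le_one Z hfin
    nlinarith

lemma mul_card_le_of_isSubspaceCover {s : Finset (Submodule K V)} (hs : IsSubspaceCover Z s) :
    n * #Z ≤ n * #s + (#Z - 1) * ∑ H ∈ s, (finrank K H - 1) :=
  calc n * #Z ≤ ∑ H ∈ s, n * #(Z.filter (·.submodule ≤ H)) := by
        rw [← mul_sum]
        exact Nat.mul_le_mul_left n (card_le_sum_card_filter_of_isSubspaceCover hs)
    _ ≤ ∑ H ∈ s, (n + (#Z - 1) * (finrank K H - 1)) :=
        sum_le_sum fun H hH => mul_card_filter_submodule_le hbal (hs.1 H hH)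
    _ = n * #s + (#Z - 1) * ∑ H ∈ s, (finrank K H - 1) := by
        rw [sum_add_distrib, ← mul_sum, sum_const, smul_eq_mul, mul_comm]

lemma min_card_le_ExC (d : ℕ) : min #Z (n * d + 1) ≤ ExC Z d := by
  refine le_ExC fun s hs => ?_
  rcases Z.eq_empty_or_nonempty with rfl | ⟨z, hz⟩
  · simp
  obtain ⟨H, hH, -⟩ := hs.2 z hz
  rw [sum_add_distrib, ← mul_sum, sum_const, smul_eq_mul, mul_one]
  exact min_le_of_mul_le_mul_add d (card_pos.mpr ⟨H, hH⟩) (mul_card_le_of_isSubspaceCover hbal hs)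

end

theorem stmt7_general (K : Type*) [Field K] (n : ℕ)
    (Z : Finset (ℙ K (Fin (n + 1) → K)))
    (hbal : ∀ H : Submodule K (Fin (n + 1) → K), 2 ≤ Module.finrank K H →
      (Set.ncard {z ∈ (Z : Set (ℙ K (Fin (n + 1) → K))) |
          Projectivization.submodule z ≤ H} - 1) * n ≤
        (Z.card - 1) * (Module.finrank K H - 1))
    (d : ℕ) :
    ExC Z d = min Z.card (n * d + 1) := by
  simp only [ncard_setOf_submodule_le] at hbal
  refine le_antisymm (le_min (ExC_le_card Z d) ?_) (min_card_le_ExC hbal d)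
  simpa [mul_comm] using ExC_le_finrank Z d

/-- If a finite set of points `Z ⊆ ℙ^n` satisfies
`(|Z ∩ H| - 1)/dim H ≤ (|Z| - 1)/n` for every positive dimensional linear subspace `H`,
then `Ex.C(Z, d) = min{|Z|, n·d + 1}` for every `d ≥ 0`. -/
theorem stmt7 (K : Type*) [Field K] (n : ℕ) (hn : 0 < n)
    (Z : Finset (ℙ K (Fin (n + 1) → K)))
    (hbal : ∀ H : Submodule K (Fin (n + 1) → K), 2 ≤ Module.finrank K H →
      (Set.ncard {z ∈ (Z : Set (ℙ K (Fin (n + 1) → K))) |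
          Projectivization.submodule z ≤ H} - 1) * n ≤
        (Z.card - 1) * (Module.finrank K H - 1))
    (d : ℕ) :
    ExC Z d = min Z.card (n * d + 1) :=
  stmt7_general K n Z hbal d
end

section
/- Let Z be a finite set of points in P^n (n ≥ 1), d a positive integer, and suppose that Ex.C(Z,d) is attained by a collection of linear subspaces H_1,...,H_s (together with leftover singleton points) minimizing |W| + ∑_i (d·dim H_i + 1) where W = Z \ ∪H_i. Then for all subsets J ⊆ {1,...,s} with |J| ≥ 2, ∑_{j∈J}(d·dim H_j + 1) ≤ d·dim Span(∪_{j∈J} H_j) + 1; in particular for n = 2 and d ≥ 1 at most one positive dimensional subspace occurs among the H_i. -/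
/-!
Merging any subfamily `J` of the optimal subspaces into their span gives another admissible cover
with the same leftover points, in which `∑_{H ∈ J} (d·dim H + 1)` is replaced by
`d·dim Span J + 1`; minimality forces the inequality. In `ℙ²` two subspaces of positive dimension
already cost at least `2(d + 1)`, more than the `2d + 1` that any subspace of the plane can cost.
-/

open Module
open scoped LinearAlgebra.Projectivization

theorem Finset.sum_insert_le_add {α M : Type*} [DecidableEq α] [AddCommMonoid M] [PartialOrder M]
    [CanonicallyOrderedAdd M] (f : α → M) (a : α) (t : Finset α) :
    ∑ x ∈ insert a t, f x ≤ f a + ∑ x ∈ t, f x := by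
  by_cases ha : a ∈ t
  · rw [Finset.insert_eq_of_mem ha]
    exact le_add_self
  · rw [Finset.sum_insert ha]

namespace SubspaceCover

variable {K V : Type*} [Field K] [AddCommGroup V] [Module K V]

noncomputable def cost (d : ℕ) (H : Submodule K V) : ℕ := d * (finrank K H - 1) + 1

structure IsCover (Z W : Finset (ℙ K V)) (s : Finset (Submodule K V)) : Prop where
  two_le_finrank : ∀ H ∈ s, 2 ≤ finrank K H
  subset : W ⊆ Z
  covers : ∀ z ∈ Z, z ∈ W ∨ ∃ H ∈ s, z.submodule ≤ H

theorem two_le_finrank_sup [FiniteDimensional K V] {J : Finset (Submodule K V)}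
    (hJ : J.Nonempty) (hrank : ∀ H ∈ J, 2 ≤ finrank K H) : 2 ≤ finrank K ↥(J.sup id) :=
  let ⟨H, hH⟩ := hJ
  (hrank H hH).trans (Submodule.finrank_mono (Finset.le_sup (f := id) hH))

theorem IsCover.merge [FiniteDimensional K V] [DecidableEq (Submodule K V)]
    {Z W : Finset (ℙ K V)} {s J : Finset (Submodule K V)} (hcov : IsCover Z W s) (hJs : J ⊆ s)
    (hJ : J.Nonempty) : IsCover Z W (insert (J.sup id) (s \ J)) where
  two_le_finrank H hH := by
    rcases Finset.mem_insert.mp hH with rfl | hH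
    · exact two_le_finrank_sup hJ fun H hH ↦ hcov.two_le_finrank H (hJs hH)
    · exact hcov.two_le_finrank H (Finset.mem_sdiff.mp hH).1
  subset := hcov.subset
  covers z hz := by
    rcases hcov.covers z hz with hW | ⟨H, hH, hzH⟩
    · exact .inl hW
    by_cases hHJ : H ∈ J
    · exact .inr ⟨_, Finset.mem_insert_self _ _, hzH.trans (Finset.le_sup (f := id) hHJ)⟩
    · exact .inr ⟨H, Finset.mem_insert_of_mem (Finset.mem_sdiff.mpr ⟨hH, hHJ⟩), hzH⟩

theorem sum_cost_le_cost_sup [FiniteDimensional K V] {d : ℕ} {Z W : Finset (ℙ K V)}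
    {s J : Finset (Submodule K V)} (hcov : IsCover Z W s)
    (hmin : ∀ s' W', IsCover Z W' s' →
      W.card + ∑ H ∈ s, cost d H ≤ W'.card + ∑ H ∈ s', cost d H)
    (hJs : J ⊆ s) (hJ : J.Nonempty) :
    ∑ H ∈ J, cost d H ≤ cost d (J.sup id) := by
  classical
  have hmerge := hmin _ W (hcov.merge hJs hJ)
  have hsplit := Finset.sum_sdiff hJs (f := cost d)
  have hinsert := Finset.sum_insert_le_add (cost d) (J.sup id) (s \ J)
  omega

theorem card_le_one_of_sum_cost_le_cost_sup [FiniteDimensional K V] (hV : finrank K V ≤ 3)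
    {d : ℕ} {s : Finset (Submodule K V)} (hrank : ∀ H ∈ s, 2 ≤ finrank K H)
    (hsum : 2 ≤ s.card → ∑ H ∈ s, cost d H ≤ cost d (s.sup id)) : s.card ≤ 1 := by
  by_contra! hcard
  have hlower : s.card * (d + 1) ≤ ∑ H ∈ s, cost d H := by
    rw [← smul_eq_mul]
    refine Finset.card_nsmul_le_sum s (cost d) (d + 1) fun H hH ↦ ?_
    have := hrank H hH
    have : d * 1 ≤ d * (finrank K H - 1) := Nat.mul_le_mul_left d (by omega)
    unfold cost
    omega
  have hupper : cost d (s.sup id) ≤ d * 2 + 1 := by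
    have := (Submodule.finrank_le (s.sup id : Submodule K V)).trans hV
    have : d * (finrank K ↥(s.sup id) - 1) ≤ d * 2 := Nat.mul_le_mul_left d (by omega)
    unfold cost
    omega
  have := hsum (by omega)
  nlinarith

end SubspaceCover

theorem stmt8_general (K : Type*) [Field K] (n : ℕ) (d : ℕ)
    (Z : Finset (ℙ K (Fin (n + 1) → K)))
    (s : Finset (Submodule K (Fin (n + 1) → K)))
    (W : Finset (ℙ K (Fin (n + 1) → K)))
    (hpos : ∀ H ∈ s, 2 ≤ Module.finrank K H)
    (hWZ : W ⊆ Z)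
    (hcover : ∀ z ∈ Z, z ∈ W ∨ ∃ H ∈ s, Projectivization.submodule z ≤ H)
    (hmin : ∀ (s' : Finset (Submodule K (Fin (n + 1) → K)))
        (W' : Finset (ℙ K (Fin (n + 1) → K))),
      (∀ H ∈ s', 2 ≤ Module.finrank K H) → W' ⊆ Z →
      (∀ z ∈ Z, z ∈ W' ∨ ∃ H ∈ s', Projectivization.submodule z ≤ H) →
      W.card + ∑ H ∈ s, (d * (Module.finrank K H - 1) + 1) ≤
        W'.card + ∑ H ∈ s', (d * (Module.finrank K H - 1) + 1)) :
    (∀ J ⊆ s, 2 ≤ J.card →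
      ∑ H ∈ J, (d * (Module.finrank K H - 1) + 1) ≤
        d * (Module.finrank K ↥(J.sup id) - 1) + 1) ∧
    (n = 2 → s.card ≤ 1) := by
  have hcov : SubspaceCover.IsCover Z W s := ⟨hpos, hWZ, hcover⟩
  have hmerge : ∀ J ⊆ s, 2 ≤ J.card → ∑ H ∈ J, SubspaceCover.cost d H ≤
      SubspaceCover.cost d (J.sup id) :=
    fun J hJs hJ ↦ SubspaceCover.sum_cost_le_cost_sup hcov
      (fun s' W' h ↦ hmin s' W' h.two_le_finrank h.subset h.covers) hJs
      (Finset.card_pos.mp (by omega))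
  refine ⟨hmerge, fun hn ↦
    SubspaceCover.card_le_one_of_sum_cost_le_cost_sup ?_ hpos (hmerge s subset_rfl)⟩
  simp [hn]

/-- Suppose `Ex.C(Z,d)` is attained by positive dimensional linear subspaces
`H_1,...,H_s` together with leftover singleton points `W = Z \ ∪ H_i`, i.e. the pair `(s, W)`
minimizes `|W| + ∑ (d·dim H_i + 1)` among all such covers of `Z`. Then for every `J ⊆ s`
with `|J| ≥ 2`, `∑_{H∈J} (d·dim H + 1) ≤ d·dim Span(∪_{H∈J} H) + 1`; in particular for
`n = 2` (and `d ≥ 1`) at most one positive dimensional subspace occurs. -/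
theorem stmt8 (K : Type*) [Field K] (n : ℕ) (hn : 0 < n) (d : ℕ) (hd : 1 ≤ d)
    (Z : Finset (ℙ K (Fin (n + 1) → K)))
    (s : Finset (Submodule K (Fin (n + 1) → K)))
    (W : Finset (ℙ K (Fin (n + 1) → K)))
    (hpos : ∀ H ∈ s, 2 ≤ Module.finrank K H)
    (hWZ : W ⊆ Z)
    (hcover : ∀ z ∈ Z, z ∈ W ∨ ∃ H ∈ s, Projectivization.submodule z ≤ H)
    (hmin : ∀ (s' : Finset (Submodule K (Fin (n + 1) → K)))
        (W' : Finset (ℙ K (Fin (n + 1) → K))),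
      (∀ H ∈ s', 2 ≤ Module.finrank K H) → W' ⊆ Z →
      (∀ z ∈ Z, z ∈ W' ∨ ∃ H ∈ s', Projectivization.submodule z ≤ H) →
      W.card + ∑ H ∈ s, (d * (Module.finrank K H - 1) + 1) ≤
        W'.card + ∑ H ∈ s', (d * (Module.finrank K H - 1) + 1)) :
    (∀ J ⊆ s, 2 ≤ J.card →
      ∑ H ∈ J, (d * (Module.finrank K H - 1) + 1) ≤
        d * (Module.finrank K ↥(J.sup id) - 1) + 1) ∧
    (n = 2 → s.card ≤ 1) :=
  stmt8_general K n d Z s W hpos hWZ hcover hmin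
end

section
/- Let Z ⊆ P^n be a nonempty finite set of points over a field, and let d ≥ 1 be an integer such that |Z ∩ L| ≤ d·(dim L) + 1 for all nonempty linear subspaces L ⊆ P^n. Then Z imposes independent conditions on forms of degree d, i.e., dim [Sym(V^*)/I(Z)]_d = |Z|. -/
/-!
For each point `p i`, a product of `d` linear forms, each vanishing on a set of the other points
whose span avoids `p i`, is a form of degree `d` vanishing at every other point but not at `p i`;
such forms span `K^Z`. The covering of the other points by `d` such sets comes from Edmonds'
matroid covering theorem: in the linear matroid of the points contracted by `p i`, a set `A` of
other points has rank `dim L - 1`, where `L` is the span of `A ∪ {p i}`, so the hypothesis for `L`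
gives `|A| ≤ d · rank A`, and the points are covered by `d` sets independent modulo `p i`.
-/

open MvPolynomial Module

open Submodule

section QuotRank

variable {K U ι : Type*} [Field K] [AddCommGroup U] [Module K U]

/-- The rank function of the linear matroid of `u` contracted by `W`, i.e. of `u` in `U ⧸ W`. -/
noncomputable def quotRank (W : Submodule K U) (u : ι → U) (t : Finset ι) : ℕ :=
  finrank K ↥(W ⊔ span K (u '' t)) - finrank K W

lemma quotRank_singleton_of_mem {W : Submodule K U} {u : ι → U} {t : ι} (h : u t ∈ W) :
    quotRank W u {t} = 0 := by
  rw [quotRank, Finset.coe_singleton, Set.image_singleton,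
    sup_eq_left.2 ((span_singleton_le_iff_mem _ _).2 h), Nat.sub_self]

variable [FiniteDimensional K U]

lemma quotRank_add_finrank (W : Submodule K U) (u : ι → U) (t : Finset ι) :
    quotRank W u t + finrank K W = finrank K ↥(W ⊔ span K (u '' t)) :=
  Nat.sub_add_cancel (finrank_mono le_sup_left)

lemma quotRank_mono (W : Submodule K U) (u : ι → U) {a b : Finset ι} (h : a ⊆ b) :
    quotRank W u a ≤ quotRank W u b :=
  Nat.sub_le_sub_right (finrank_mono (sup_le_sup_left (span_mono (Set.image_mono h)) W)) _

lemma quotRank_sup_span_add [DecidableEq ι] (W : Submodule K U) (u : ι → U) (A b : Finset ι) :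
    quotRank (W ⊔ span K (u '' A)) u b + quotRank W u A = quotRank W u (A ∪ b) := by
  have hb := quotRank_add_finrank (W ⊔ span K (u '' A)) u b
  have hA := quotRank_add_finrank W u A
  have hAb := quotRank_add_finrank W u (A ∪ b)
  rw [Finset.coe_union, Set.image_union, span_union, ← sup_assoc] at hAb
  omega

lemma quotRank_singleton_of_notMem {W : Submodule K U} {u : ι → U} {t : ι} (h : u t ∉ W) :
    quotRank W u {t} = 1 := by
  have hlt : finrank K W < finrank K ↥(W ⊔ span K {u t}) :=
    finrank_lt_finrank_of_lt (left_lt_sup.2 fun hle => h (hle (mem_span_singleton_self _)))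
  have hle : finrank K ↥(W ⊔ span K {u t}) ≤ finrank K W + 1 := by
    have := finrank_add_le_finrank_add_finrank W (span K {u t})
    rw [finrank_span_singleton (ne_of_mem_of_not_mem W.zero_mem h).symm] at this
    exact this
  rw [quotRank, Finset.coe_singleton, Set.image_singleton]
  omega

lemma card_le_mul_quotRank [Fintype ι] (p : ι → U) (d : ℕ)
    (hcond : ∀ L : Submodule K U, L ≠ ⊥ →
      Set.ncard {i | p i ∈ L} ≤ d * (finrank K L - 1) + 1)
    {i : ι} (hp : p i ≠ 0) {a : Finset ι} (hi : i ∉ a) :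
    a.card ≤ d * quotRank (span K {p i}) p a := by
  classical
  set L := span K {p i} ⊔ span K (p '' a)
  have hL := quotRank_add_finrank (span K {p i}) p a
  rw [finrank_span_singleton hp] at hL
  have hiL : p i ∈ L := mem_sup_left (mem_span_singleton_self _)
  have hsub : (↑(insert i a) : Set ι) ⊆ {j | p j ∈ L} := by
    intro j hj
    rcases Finset.mem_insert.1 hj with rfl | hj
    · exact hiL
    · exact mem_sup_right (subset_span ⟨j, hj, rfl⟩)
  have hcard :=
    (Set.ncard_le_ncard hsub).trans (hcond L ((Submodule.ne_bot_iff L).2 ⟨_, hiL, hp⟩))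
  rw [Set.ncard_coe_finset, Finset.card_insert_of_notMem hi, ← hL, Nat.add_sub_cancel] at hcard
  omega

end QuotRank

section IndepCover

variable {K U ι κ : Type*} [Field K] [AddCommGroup U] [Module K U]

lemma LinearIndepOn.union_of_quotient_sup_span {W : Submodule K U} {u : ι → U} {s t C : Set ι}
    (hsC : s ⊆ C) (hs : LinearIndepOn K (W.mkQ ∘ u) s)
    (ht : LinearIndepOn K ((W ⊔ span K (u '' C)).mkQ ∘ u) t) :
    LinearIndepOn K (W.mkQ ∘ u) (s ∪ t) := by
  refine hs.union_of_quotient (ht.of_comp (liftQ _ (W.mapQ _ LinearMap.id le_sup_left) ?_))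
  rw [span_le, Set.image_subset_iff]
  intro x hx
  simp only [Set.mem_preimage, Function.comp_apply, mkQ_apply, SetLike.mem_coe, LinearMap.mem_ker,
    mapQ_apply, LinearMap.id_apply, Quotient.mk_eq_zero]
  exact mem_sup_right (subset_span ⟨x, hsC hx, rfl⟩)

lemma notMem_span_of_linearIndepOn_mkQ {u : ι → U} {i : ι} {t : Set ι} (hu : u i ≠ 0)
    (hi : i ∉ t) (ht : LinearIndepOn K ((span K {u i}).mkQ ∘ u) t) :
    u i ∉ span K (u '' t) := by
  have hit : LinearIndepOn K u ({i} ∪ t) :=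
    (LinearIndepOn.singleton hu).union_of_quotient (by rwa [Set.image_singleton])
  rw [← Set.insert_eq] at hit
  exact (hit.mono (Set.subset_insert i t)).notMem_span_iff.2 ⟨hit, hi⟩

structure IsIndepCover (W : κ → Submodule K U) (u : ι → U) (s : Finset ι) (P : κ → Finset ι) :
    Prop where
  subset : ∀ k, P k ⊆ s
  exists_mem : ∀ x ∈ s, ∃ k, x ∈ P k
  linearIndepOn : ∀ k, LinearIndepOn K ((W k).mkQ ∘ u) (P k : Set ι)

variable {W : κ → Submodule K U} {u : ι → U}

lemma isIndepCover_empty : IsIndepCover W u ∅ fun _ => ∅ :=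
  ⟨fun _ => subset_rfl, by simp, by simp⟩

lemma IsIndepCover.union [DecidableEq ι] {A B : Finset ι} {P Q : κ → Finset ι}
    (hP : IsIndepCover W u A P) (hQ : IsIndepCover (fun k => W k ⊔ span K (u '' A)) u B Q) :
    IsIndepCover W u (A ∪ B) fun k => P k ∪ Q k where
  subset k := Finset.union_subset_union (hP.subset k) (hQ.subset k)
  exists_mem x hx := by
    rcases Finset.mem_union.1 hx with hx | hx
    · obtain ⟨k, hk⟩ := hP.exists_mem x hx
      exact ⟨k, Finset.mem_union_left _ hk⟩
    · obtain ⟨k, hk⟩ := hQ.exists_mem x hx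
      exact ⟨k, Finset.mem_union_right _ hk⟩
  linearIndepOn k := by
    rw [Finset.coe_union]
    exact (hP.linearIndepOn k).union_of_quotient_sup_span
      (Finset.coe_subset.2 (hP.subset k)) (hQ.linearIndepOn k)

lemma IsIndepCover.insert [DecidableEq ι] [DecidableEq κ] {s : Finset ι} {P : κ → Finset ι}
    {t : ι} {k : κ} (ht : u t ∉ W k)
    (hP : IsIndepCover (Function.update W k (W k ⊔ span K {u t})) u s P) :
    IsIndepCover W u (insert t s) (Function.update P k (insert t (P k))) where
  subset j := by
    rcases eq_or_ne j k with rfl | hj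
    · simpa using Finset.insert_subset_insert t (hP.subset j)
    · simpa [hj] using (hP.subset j).trans (Finset.subset_insert t s)
  exists_mem x hx := by
    rcases Finset.mem_insert.1 hx with rfl | hx
    · exact ⟨k, by simp⟩
    · obtain ⟨j, hj⟩ := hP.exists_mem x hx
      refine ⟨j, ?_⟩
      rcases eq_or_ne j k with rfl | hjk
      · simp [hj]
      · simpa [hjk] using hj
  linearIndepOn j := by
    rcases eq_or_ne j k with rfl | hj
    · have hPj := hP.linearIndepOn j
      rw [Function.update_self, ← Set.image_singleton] at hPj
      rw [Function.update_self, Finset.coe_insert, Set.insert_eq]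
      refine (LinearIndepOn.singleton ?_).union_of_quotient_sup_span subset_rfl hPj
      simpa using ht
    · rw [Function.update_of_ne hj]
      exact Function.update_of_ne hj (W k ⊔ span K {u t}) W ▸ hP.linearIndepOn j

end IndepCover

section Covering

variable {K U ι κ : Type*} [Field K] [AddCommGroup U] [Module K U] [FiniteDimensional K U]
  [DecidableEq ι] [Fintype κ] {W : κ → Submodule K U} {u : ι → U}

lemma card_le_sum_quotRank_sup_span {s A : Finset ι}
    (hs : ∀ a ⊆ s, a.card ≤ ∑ k, quotRank (W k) u a) (hAs : A ⊆ s)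
    (hA : ∑ k, quotRank (W k) u A ≤ A.card) :
    ∀ b ⊆ s \ A, b.card ≤ ∑ k, quotRank (W k ⊔ span K (u '' A)) u b := by
  intro b hb
  have hsum : ∑ k, quotRank (W k ⊔ span K (u '' A)) u b + ∑ k, quotRank (W k) u A =
      ∑ k, quotRank (W k) u (A ∪ b) := by
    rw [← Finset.sum_add_distrib]
    exact Finset.sum_congr rfl fun k _ => quotRank_sup_span_add (W k) u A b
  have hAb := hs (A ∪ b) (Finset.union_subset hAs (hb.trans Finset.sdiff_subset))
  rw [Finset.card_union_of_disjoint (Finset.disjoint_of_subset_right hb Finset.disjoint_sdiff)]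
    at hAb
  omega

lemma card_le_sum_quotRank_update [DecidableEq κ] {s : Finset ι} {t : ι} {k₀ : κ}
    (hstrict : ∀ a ⊆ s, a.Nonempty → a ≠ s → a.card < ∑ k, quotRank (W k) u a) (ht : t ∈ s)
    (hk₀ : u t ∉ W k₀) :
    ∀ a ⊆ s.erase t,
      a.card ≤ ∑ k, quotRank (Function.update W k₀ (W k₀ ⊔ span K {u t}) k) u a := by
  intro a ha
  rcases a.eq_empty_or_nonempty with rfl | hne
  · simp
  have hlt := hstrict a (ha.trans (s.erase_subset t)) hne
    fun has => s.notMem_erase t (ha (has ▸ ht))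
  have hcontract : quotRank (W k₀ ⊔ span K {u t}) u a + 1 = quotRank (W k₀) u (insert t a) := by
    have := quotRank_sup_span_add (W k₀) u {t} a
    rwa [quotRank_singleton_of_notMem hk₀, Finset.coe_singleton, Set.image_singleton,
      ← Finset.insert_eq] at this
  have hmono := quotRank_mono (W k₀) u (a.subset_insert t)
  rw [Fintype.sum_eq_add_sum_compl k₀] at hlt ⊢
  have hrest : ∑ k ∈ {k₀}ᶜ, quotRank (Function.update W k₀ (W k₀ ⊔ span K {u t}) k) u a =
      ∑ k ∈ {k₀}ᶜ, quotRank (W k) u a :=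
    Finset.sum_congr rfl fun k hk => by rw [Function.update_of_ne (by simpa using hk)]
  rw [Function.update_self, hrest]
  omega

theorem exists_isIndepCover (u : ι → U) (s : Finset ι) (W : κ → Submodule K U)
    (hs : ∀ a ⊆ s, a.card ≤ ∑ k, quotRank (W k) u a) : ∃ P, IsIndepCover W u s P := by
  classical
  induction s using Finset.strongInduction generalizing W with
  | H s IH =>
  -- Either split `s` along a tight subset `A` and contract `A`, or, if every proper subset is
  -- strictly below the bound, put one point `t` into a part where it is not a loop and contract
  -- `t` there: the strict inequality pays for the rank lost.
  rcases s.eq_empty_or_nonempty with rfl | hne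
  · exact ⟨_, isIndepCover_empty⟩
  by_cases htight : ∃ A ⊆ s, A.Nonempty ∧ A ≠ s ∧ ∑ k, quotRank (W k) u A ≤ A.card
  · obtain ⟨A, hAs, hAne, hAs', hA⟩ := htight
    obtain ⟨P, hP⟩ := IH A (Finset.ssubset_iff_subset_ne.2 ⟨hAs, hAs'⟩) W
      fun a ha => hs a (ha.trans hAs)
    obtain ⟨Q, hQ⟩ := IH (s \ A) (Finset.sdiff_ssubset hAs hAne) _
      (card_le_sum_quotRank_sup_span hs hAs hA)
    exact ⟨_, Finset.union_sdiff_of_subset hAs ▸ hP.union hQ⟩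
  · push Not at htight
    obtain ⟨t, ht⟩ := hne
    obtain ⟨k, hk⟩ : ∃ k, u t ∉ W k := by
      by_contra! hmem
      have := hs {t} (Finset.singleton_subset_iff.2 ht)
      simp [quotRank_singleton_of_mem (hmem _)] at this
    obtain ⟨P, hP⟩ := IH (s.erase t) (Finset.erase_ssubset ht) _
      (card_le_sum_quotRank_update htight ht hk)
    exact ⟨_, Finset.insert_erase ht ▸ hP.insert hk⟩

end Covering

lemma LinearMap.surjective_of_forall_single_mem_range {R M ι : Type*} [Semiring R]
    [AddCommMonoid M] [Module R M] [Fintype ι] [DecidableEq ι] (f : M →ₗ[R] ι → R)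
    (h : ∀ i, Pi.single i 1 ∈ LinearMap.range f) : Function.Surjective f := by
  rw [← LinearMap.range_eq_top, eq_top_iff, ← (Pi.basisFun R ι).span_eq, span_le]
  rintro _ ⟨i, rfl⟩
  simpa using h i

section Forms

variable {K σ ι : Type*} [Field K] [Fintype σ] [DecidableEq σ]

lemma exists_isHomogeneous_eval_eq_prod {κ : Type*} [Fintype κ] (φ : κ → Dual K (σ → K)) :
    ∃ F : MvPolynomial σ K, F.IsHomogeneous (Fintype.card κ) ∧ ∀ c, eval c F = ∏ k, φ k c := by
  refine ⟨∏ k, (LinearMap.toMatrix' (LinearMap.pi φ)).toMvPolynomial k, ?_, fun c => ?_⟩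
  · simpa using IsHomogeneous.prod Finset.univ _ (fun _ => 1)
      fun k _ => Matrix.toMvPolynomial_isHomogeneous _ k
  · simp [Matrix.toMvPolynomial_eval_eq_apply, LinearMap.toMatrix'_mulVec]

lemma exists_isHomogeneous_eval_ne_zero_and_eval_eq_zero [Fintype ι] [DecidableEq ι]
    (p : ι → σ → K) (d : ℕ)
    (hcond : ∀ L : Submodule K (σ → K), L ≠ ⊥ →
      Set.ncard {i | p i ∈ L} ≤ d * (finrank K L - 1) + 1)
    {i : ι} (hp : p i ≠ 0) :
    ∃ F : MvPolynomial σ K, F.IsHomogeneous d ∧ eval (p i) F ≠ 0 ∧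
      ∀ j ≠ i, eval (p j) F = 0 := by
  obtain ⟨P, hP⟩ := exists_isIndepCover p (Finset.univ.erase i) (fun _ : Fin d => span K {p i})
    fun a ha => by
      simpa [mul_comm] using card_le_mul_quotRank p d hcond hp fun h => by simpa using ha h
  have hsep : ∀ k, ∃ φ : Dual K (σ → K), φ (p i) ≠ 0 ∧ ∀ j ∈ P k, φ (p j) = 0 := by
    intro k
    have hi : i ∉ (P k : Set ι) := fun h => by simpa using hP.subset k h
    obtain ⟨φ, hφi, hφP⟩ := exists_dual_map_eq_bot_of_notMem
      (notMem_span_of_linearIndepOn_mkQ hp hi (hP.linearIndepOn k)) inferInstance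
    exact ⟨φ, hφi, fun j hj => LinearMap.le_ker_iff_map.2 hφP (subset_span ⟨j, hj, rfl⟩)⟩
  choose φ hφi hφP using hsep
  obtain ⟨F, hF, hFeval⟩ := exists_isHomogeneous_eval_eq_prod φ
  refine ⟨F, by simpa using hF, by simp [hFeval, Finset.prod_ne_zero_iff, hφi], fun j hj => ?_⟩
  obtain ⟨k, hk⟩ := hP.exists_mem j (by simpa using hj)
  rw [hFeval]
  exact Finset.prod_eq_zero (Finset.mem_univ k) (hφP k j hk)

end Forms

theorem stmt10_general (K : Type*) [Field K] (n : ℕ) (z : ℕ)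
    (p : Fin z → (Fin (n + 1) → K))
    (hp0 : ∀ i, p i ≠ 0)
    (d : ℕ)
    (hcond : ∀ L : Submodule K (Fin (n + 1) → K), L ≠ ⊥ →
      Set.ncard {i : Fin z | p i ∈ L} ≤ d * (Module.finrank K L - 1) + 1) :
    Function.Surjective (fun f : homogeneousSubmodule (Fin (n + 1)) K d =>
      fun i : Fin z => MvPolynomial.eval (p i) (f : MvPolynomial (Fin (n + 1)) K)) := by
  let ev : homogeneousSubmodule (Fin (n + 1)) K d →ₗ[K] Fin z → K :=
    LinearMap.pi fun i => (aeval (p i)).toLinearMap ∘ₗ (homogeneousSubmodule _ K d).subtype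
  refine ev.surjective_of_forall_single_mem_range fun i => ?_
  obtain ⟨F, hF, hFi, hFj⟩ := exists_isHomogeneous_eval_ne_zero_and_eval_eq_zero p d hcond (hp0 i)
  refine ⟨⟨(eval (p i) F)⁻¹ • F, smul_mem _ _ ((mem_homogeneousSubmodule d F).2 hF)⟩,
    funext fun j => ?_⟩
  rcases eq_or_ne j i with rfl | hj
  · simp [ev, hFi]
  · simp [ev, hFj j hj, hj]

/-- Let `Z = {p_1,...,p_z} ⊆ ℙ^n` be a nonempty finite set of points (given by
nonzero, pairwise non-proportional vectors) over a field, and let `d ≥ 1` be such that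
`|Z ∩ L| ≤ d·dim L + 1` for every nonempty linear subspace `L ⊆ ℙ^n` (a nonzero submodule,
of projective dimension `finrank L - 1`). Then `Z` imposes independent conditions on forms
of degree `d`: the evaluation map `[Sym(V^*)]_d → K^Z` is surjective, i.e.
`dim [Sym(V^*)/I(Z)]_d = |Z|`. -/
theorem stmt10 (K : Type*) [Field K] (n : ℕ) (z : ℕ) (hz : 0 < z)
    (p : Fin z → (Fin (n + 1) → K))
    (hp0 : ∀ i, p i ≠ 0)
    (hdist : ∀ i j, i ≠ j → ∀ c : K, p j ≠ c • p i)
    (d : ℕ) (hd : 1 ≤ d)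
    (hcond : ∀ L : Submodule K (Fin (n + 1) → K), L ≠ ⊥ →
      Set.ncard {i : Fin z | p i ∈ L} ≤ d * (Module.finrank K L - 1) + 1) :
    Function.Surjective (fun f : homogeneousSubmodule (Fin (n + 1)) K d =>
      fun i : Fin z => MvPolynomial.eval (p i) (f : MvPolynomial (Fin (n + 1)) K)) :=
  stmt10_general K n z p hp0 d hcond
end
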